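/- arXiv:1802.08955 — 5 statements merged into one kernel-verified Lean document; each statement's English description precedes it below -/
import Mathlib

section
/- In a finite acyclic digraph G with root r and nonnegative real edge weights w, the minimum weight of an r-cut is attained at a trivial r-cut, i.e., min over nonempty U ⊆ V\{r} of w(δ⁻(U)) equals min over vertices v ≠ r of w(δ⁻(v)). -/
/-!
By acyclicity every nonempty `U` has a vertex `v` with no edge from `U` into it. Every edge
entering `v` then enters `U`, so with nonnegative weights `w(δ⁻(v)) ≤ w(δ⁻(U))`; conversely each
trivial cut is itself an `r`-cut.
-/

open scoped Classical

lemma wellFounded_of_acyclic {V : Type*} [Finite V] {D : V → V → Prop}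
    (hD : ∀ v, ¬ Relation.TransGen D v v) : WellFounded D :=
  have : IsTrans V (Relation.TransGen D) := ⟨fun _ _ _ => Relation.TransGen.trans⟩
  have : Std.Irrefl (Relation.TransGen D) := ⟨hD⟩
  Subrelation.wf Relation.TransGen.single (Finite.wellFounded_of_trans_of_irrefl _)

section CutWeight

variable {V : Type*} [Fintype V] (D : V → V → Prop) (w : V → V → ℝ)

/-- The weight `w(δ⁻(U))` of the edges entering `U`. -/
noncomputable def cutWeight (U : Set V) : ℝ :=
  ∑ p : V × V, if D p.1 p.2 ∧ p.1 ∉ U ∧ p.2 ∈ U then w p.1 p.2 else 0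

/-- The weight `w(δ⁻(v))` of the edges entering `v`. -/
noncomputable def inWeight (v : V) : ℝ :=
  ∑ u : V, if D u v then w u v else 0

variable {D w}

lemma cutWeight_singleton (hD : ∀ v, ¬ D v v) (v : V) :
    cutWeight D w {v} = inWeight D w v := by
  rw [cutWeight, Fintype.sum_prod_type]
  refine Finset.sum_congr rfl fun u _ => ?_
  rw [Finset.sum_eq_single v (fun b _ hb => by simp [hb]) (by simp)]
  by_cases h : D u v
  · have huv : u ≠ v := by rintro rfl; exact hD u h
    simp [h, huv]
  · simp [h]

lemma cutWeight_singleton_le (hw : ∀ u v, 0 ≤ w u v) {U : Set V} {v : V} (hv : v ∈ U)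
    (hmin : ∀ u ∈ U, ¬ D u v) : cutWeight D w {v} ≤ cutWeight D w U := by
  refine Finset.sum_le_sum fun p _ => ?_
  by_cases h : D p.1 p.2 ∧ p.1 ∉ ({v} : Set V) ∧ p.2 ∈ ({v} : Set V)
  · rw [if_pos h]
    obtain ⟨hd, -, hp2 : p.2 = v⟩ := h
    have hp1 : p.1 ∉ U := fun hmem => hmin p.1 hmem (hp2 ▸ hd)
    rw [if_pos ⟨hd, hp1, hp2 ▸ hv⟩]
  · rw [if_neg h]
    split_ifs
    exacts [hw _ _, le_rfl]

end CutWeight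

theorem stmt_2_general {V : Type*} [Fintype V] (D : V → V → Prop) (w : V → V → ℝ)
    (hD : ∀ v, ¬ Relation.TransGen D v v)
    (hw : ∀ u v, 0 ≤ w u v) (r : V) :
    sInf {x : ℝ | ∃ U : Set V, U.Nonempty ∧ r ∉ U ∧
        x = ∑ p : V × V, if D p.1 p.2 ∧ p.1 ∉ U ∧ p.2 ∈ U then w p.1 p.2 else 0} =
    sInf {x : ℝ | ∃ v : V, v ≠ r ∧
        x = ∑ u : V, if D u v then w u v else 0} := by
  have hirrefl : ∀ v, ¬ D v v := fun v h => hD v (.single h)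
  apply csInf_eq_csInf_of_forall_exists_le
  · rintro _ ⟨U, hU, hrU, rfl⟩
    obtain ⟨v, hvU, hmin⟩ := (wellFounded_of_acyclic hD).has_min U hU
    refine ⟨inWeight D w v, ⟨v, ne_of_mem_of_not_mem hvU hrU, rfl⟩, ?_⟩
    rw [← cutWeight_singleton hirrefl]
    exact cutWeight_singleton_le hw hvU hmin
  · rintro _ ⟨v, hv, rfl⟩
    exact ⟨_, ⟨{v}, Set.singleton_nonempty v, by simpa using hv.symm, rfl⟩,
      (cutWeight_singleton hirrefl v).le⟩

/-- In a finite acyclic digraph with nonnegative edge weights, the minimum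
weight of an `r`-cut (over nonempty vertex sets avoiding `r`) is attained at a trivial
(single-vertex) `r`-cut. -/
theorem stmt_2 {V : Type*} [Fintype V] (D : V → V → Prop) (w : V → V → ℝ)
    (hD : ∀ v, ¬ Relation.TransGen D v v)
    (hw : ∀ u v, 0 ≤ w u v) (r : V) (hV : ∃ v, v ≠ r) :
    sInf {x : ℝ | ∃ U : Set V, U.Nonempty ∧ r ∉ U ∧
        x = ∑ p : V × V, if D p.1 p.2 ∧ p.1 ∉ U ∧ p.2 ∈ U then w p.1 p.2 else 0} =
    sInf {x : ℝ | ∃ v : V, v ≠ r ∧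
        x = ∑ u : V, if D u v then w u v else 0} :=
  stmt_2_general D w hD hw r
end

section
/- Let G be an undirected multigraph with two parallel edges e and f, w nonnegative edge weights, and G_f = G \ f with weights w_f where w_f(e) = w(e) + w(f) and w_f(g) = w(g) otherwise. Then for every vertex r, the maximum value over r-acyclic orientations of the maximum weighted packing of r-arborescences satisfies k(G, w, r) = k(G_f, w_f, r). -/
open scoped Classical

variable {V E : Type*}

/-- The arc relation of a partial orientation `d`: there is an arc `u → v` if some
non-loop edge of `F` is directed from `u` to `v`. (Loops are never oriented/used.) -/
def arcRel (ends : E → Sym2 V) (F : Set E) (d : E → V × V) (u v : V) : Prop :=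
  ∃ e ∈ F, ¬ (ends e).IsDiag ∧ d e = (u, v)

/-- `d` is an orientation of the (non-loop) edges of `F`: the chosen direction of each
edge is compatible with its endpoints. -/
def IsOrientation (ends : E → Sym2 V) (F : Set E) (d : E → V × V) : Prop :=
  ∀ e ∈ F, ¬ (ends e).IsDiag → ends e = s((d e).1, (d e).2)

/-- The orientation `d` is acyclic: no directed cycle. -/
def AcyclicOn (ends : E → Sym2 V) (F : Set E) (d : E → V × V) : Prop :=
  ∀ v, ¬ Relation.TransGen (arcRel ends F d) v v

/-- `r` is the unique vertex of `S` with indegree `0` in the orientation `d`. -/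
def RootedAt (ends : E → Sym2 V) (F : Set E) (S : Set V) (d : E → V × V) (r : V) : Prop :=
  r ∈ S ∧ (∀ u, ¬ arcRel ends F d u r) ∧ ∀ v ∈ S, (∀ u, ¬ arcRel ends F d u v) → v = r

/-- `A` is (the edge set of) a spanning `r`-arborescence of the digraph obtained by
orienting the edges of `F` by `d`, spanning the vertex set `S`: every `v ∈ S`, `v ≠ r`,
has exactly one incoming edge of `A`, no edge of `A` enters `r`, and every vertex of `S`
is reachable from `r` along edges of `A`. -/
def IsArbM (ends : E → Sym2 V) (F : Set E) (S : Set V) (d : E → V × V) (r : V)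
    (A : Set E) : Prop :=
  A ⊆ F ∧ (∀ e ∈ A, ¬ (ends e).IsDiag) ∧
  (∀ v ∈ S, v ≠ r → ∃! e, e ∈ A ∧ (d e).2 = v) ∧
  (∀ e ∈ A, (d e).1 ∈ S ∧ (d e).2 ∈ S ∧ (d e).2 ≠ r) ∧
  (∀ v ∈ S, Relation.ReflTransGen (fun a b => ∃ e ∈ A, d e = (a, b)) r v)

/-- `kOn ends F S w r`: the maximum, over `r`-acyclic orientations `d` of the subgraph
with edges `F` and vertices `S`, of the maximum value of a weighted packing of spanning
`r`-arborescences subject to the capacities `w`. -/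
noncomputable def kOn [Fintype E] (ends : E → Sym2 V) (F : Set E) (S : Set V)
    (w : E → ℝ) (r : V) : ℝ :=
  sSup {x : ℝ | ∃ d : E → V × V, IsOrientation ends F d ∧ AcyclicOn ends F d ∧
    RootedAt ends F S d r ∧
    ∃ (t : ℕ) (lam : Fin t → ℝ) (A : Fin t → Set E),
      (∀ i, 0 ≤ lam i) ∧ (∀ i, IsArbM ends F S d r (A i)) ∧
      (∀ e ∈ F, ∑ i, (if e ∈ A i then lam i else 0) ≤ w e) ∧
      x = ∑ i, lam i}

/-- `kAll ends F S w`: the maximum of `kOn ends F S w r` over all roots `r ∈ S`. -/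
noncomputable def kAll [Fintype E] (ends : E → Sym2 V) (F : Set E) (S : Set V)
    (w : E → ℝ) : ℝ :=
  sSup ((fun r => kOn ends F S w r) '' S)

/-! In an acyclic orientation two parallel edges `e`, `f` point the same way, so they are
interchangeable in every arborescence. Replacing `f` by `e` turns a packing of `G` into one of
`G \ f` under the merged capacity `w e + w f`. Conversely, given a packing of `G \ f` with load
`S ≤ w e + w f` on `e`, scale it by `c = w e / (w e + w f)`, and add the copy scaled by `1 - c`
in which `e` is replaced by `f`: the loads on `e` and `f` become `c S ≤ w e` and
`(1 - c) S ≤ w f`, and the value does not change. -/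

/-- The paper's `r`-acyclic orientations. -/
def IsRootedAcyclicOrientation (ends : E → Sym2 V) (F : Set E) (S : Set V) (d : E → V × V)
    (r : V) : Prop :=
  IsOrientation ends F d ∧ AcyclicOn ends F d ∧ RootedAt ends F S d r

noncomputable def load {t : ℕ} (lam : Fin t → ℝ) (A : Fin t → Set E) (g : E) : ℝ :=
  ∑ i, if g ∈ A i then lam i else 0

def IsPacking (ends : E → Sym2 V) (F : Set E) (S : Set V) (d : E → V × V) (r : V)
    (w : E → ℝ) {t : ℕ} (lam : Fin t → ℝ) (A : Fin t → Set E) : Prop :=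
  (∀ i, 0 ≤ lam i) ∧ (∀ i, IsArbM ends F S d r (A i)) ∧ ∀ g ∈ F, load lam A g ≤ w g

def packingValues (ends : E → Sym2 V) (F : Set E) (S : Set V) (w : E → ℝ) (r : V) : Set ℝ :=
  {x | ∃ d, IsRootedAcyclicOrientation ends F S d r ∧
    ∃ (t : ℕ) (lam : Fin t → ℝ) (A : Fin t → Set E),
      IsPacking ends F S d r w lam A ∧ x = ∑ i, lam i}

theorem kOn_eq_sSup_packingValues [Fintype E] (ends : E → Sym2 V) (F : Set E) (S : Set V)
    (w : E → ℝ) (r : V) : kOn ends F S w r = sSup (packingValues ends F S w r) := by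
  simp only [kOn, packingValues, IsRootedAcyclicOrientation, IsPacking, load, and_assoc]

noncomputable def swapEdge (a b : E) (A : Set E) : Set E :=
  (fun g => if g = a then b else g) '' A

section Load

variable {t : ℕ} {lam : Fin t → ℝ} {A : Fin t → Set E} {a b g : E}

theorem mem_swapEdge {s : Set E} : g ∈ swapEdge a b s ↔ g ∈ s ∧ g ≠ a ∨ g = b ∧ a ∈ s := by
  simp only [swapEdge, Set.mem_image]
  grind

theorem load_eq_zero_of_notMem (h : ∀ i, g ∉ A i) : load lam A g = 0 :=
  Finset.sum_eq_zero fun i _ => if_neg (h i)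

theorem load_mul_left (c : ℝ) : load (fun i => c * lam i) A g = c * load lam A g := by
  simp only [load, Finset.mul_sum, mul_ite, mul_zero]

theorem load_append {t' : ℕ} (lam' : Fin t' → ℝ) (A' : Fin t' → Set E) :
    load (Fin.append lam lam') (Fin.append A A') g = load lam A g + load lam' A' g := by
  simp only [load, Fin.sum_univ_add, Fin.append_left, Fin.append_right]

theorem load_swapEdge_of_ne (hga : g ≠ a) (hgb : g ≠ b) :
    load lam (fun i => swapEdge a b (A i)) g = load lam A g := by
  simp only [load, mem_swapEdge, hga, hgb, ne_eq, not_false_eq_true, and_true, false_and,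
    or_false]

theorem load_swapEdge_left (hab : a ≠ b) : load lam (fun i => swapEdge a b (A i)) a = 0 :=
  load_eq_zero_of_notMem fun i => by simp [mem_swapEdge, hab]

theorem load_swapEdge_right_le (hlam : ∀ i, 0 ≤ lam i) :
    load lam (fun i => swapEdge a b (A i)) b ≤ load lam A b + load lam A a := by
  rw [load, load, load, ← Finset.sum_add_distrib]
  refine Finset.sum_le_sum fun i _ => ?_
  have := hlam i
  simp only [mem_swapEdge, true_and]
  split_ifs <;> grind

end Load

section Arborescence

variable {ends : E → Sym2 V} {F F' : Set E} {S : Set V} {d d' : E → V × V} {r : V}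
  {A : Set E}

theorem IsArbM.mono_edges (hA : IsArbM ends F S d r A) (hsub : A ⊆ F') :
    IsArbM ends F' S d r A :=
  ⟨hsub, hA.2⟩

theorem IsArbM.congr (hA : IsArbM ends F S d' r A) (h : ∀ g ∈ F, d g = d' g) :
    IsArbM ends F S d r A := by
  obtain ⟨hAF, hdiag, hin, hends, hreach⟩ := hA
  have hA : ∀ g ∈ A, d g = d' g := fun g hg => h g (hAF hg)
  refine ⟨hAF, hdiag, fun v hv hvr => ?_, fun g hg => hA g hg ▸ hends g hg, fun v hv => ?_⟩
  · obtain ⟨g, ⟨hg, hgv⟩, huniq⟩ := hin v hv hvr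
    exact ⟨g, ⟨hg, hA g hg ▸ hgv⟩, fun c hc => huniq c ⟨hc.1, hA c hc.1 ▸ hc.2⟩⟩
  · refine Relation.ReflTransGen.mono ?_ _ _ (hreach v hv)
    rintro x y ⟨g, hg, hgd⟩
    exact ⟨g, hg, by rw [hA g hg, hgd]⟩

/-- No injectivity of `φ` is needed: distinct edges of `A` have distinct heads. -/
theorem IsArbM.image (hA : IsArbM ends F S d r A) (φ : E → E) (hd : ∀ g ∈ A, d (φ g) = d g)
    (hφ : ∀ g ∈ A, ¬ (ends (φ g)).IsDiag) (hsub : φ '' A ⊆ F') :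
    IsArbM ends F' S d r (φ '' A) := by
  obtain ⟨-, -, hin, hends, hreach⟩ := hA
  refine ⟨hsub, ?_, fun v hv hvr => ?_, ?_, fun v hv => ?_⟩
  · rintro _ ⟨g, hg, rfl⟩
    exact hφ g hg
  · obtain ⟨g, ⟨hg, hgv⟩, huniq⟩ := hin v hv hvr
    refine ⟨φ g, ⟨⟨g, hg, rfl⟩, hd g hg ▸ hgv⟩, ?_⟩
    rintro _ ⟨⟨c, hc, rfl⟩, hcv⟩
    rw [huniq c ⟨hc, hd c hc ▸ hcv⟩]
  · rintro _ ⟨g, hg, rfl⟩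
    exact hd g hg ▸ hends g hg
  · refine Relation.ReflTransGen.mono ?_ _ _ (hreach v hv)
    rintro x y ⟨g, hg, hgd⟩
    exact ⟨φ g, ⟨g, hg, rfl⟩, hd g hg ▸ hgd⟩

theorem IsArbM.swapEdge {a b : E} (hA : IsArbM ends F S d r A) (hd : d a = d b)
    (hb : ¬ (ends b).IsDiag) (hsub : swapEdge a b A ⊆ F') :
    IsArbM ends F' S d r (swapEdge a b A) :=
  hA.image _ (fun g _ => by split_ifs with h <;> simp [h, hd])
    (fun g hg => by split_ifs with h; exacts [hb, hA.2.1 g hg]) hsub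

end Arborescence

section Orientation

variable {ends : E → Sym2 V} {F : Set E} {S : Set V} {d d' : E → V × V} {r : V} {e f : E}

theorem arcRel_congr (h : ∀ g ∈ F, d g = d' g) : arcRel ends F d = arcRel ends F d' := by
  funext u v
  exact propext ⟨fun ⟨g, hg, hdiag, hgd⟩ => ⟨g, hg, hdiag, h g hg ▸ hgd⟩,
    fun ⟨g, hg, hdiag, hgd⟩ => ⟨g, hg, hdiag, (h g hg).symm ▸ hgd⟩⟩

theorem IsRootedAcyclicOrientation.congr (hd : IsRootedAcyclicOrientation ends F S d' r)
    (h : ∀ g ∈ F, d g = d' g) : IsRootedAcyclicOrientation ends F S d r := by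
  obtain ⟨hor, hac, hroot⟩ := hd
  refine ⟨fun g hg hdiag => h g hg ▸ hor g hg hdiag, ?_, ?_⟩
  · unfold AcyclicOn
    rwa [arcRel_congr h]
  · unfold RootedAt
    rwa [arcRel_congr h]

/-- Two parallel edges oriented oppositely would form a directed 2-cycle. -/
theorem AcyclicOn.eq_of_parallel (hac : AcyclicOn ends F d) (hor : IsOrientation ends F d)
    (he : e ∈ F) (hf : f ∈ F) (hpar : ends e = ends f) (hloop : ¬ (ends e).IsDiag) :
    d f = d e := by
  have hfl : ¬ (ends f).IsDiag := hpar ▸ hloop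
  have hends : s((d e).1, (d e).2) = s((d f).1, (d f).2) := by
    rw [← hor e he hloop, ← hor f hf hfl, hpar]
  rcases Sym2.eq_iff.1 hends with ⟨h₁, h₂⟩ | ⟨h₁, h₂⟩
  · exact Prod.ext h₁.symm h₂.symm
  · have hfwd : arcRel ends F d (d e).1 (d e).2 := ⟨e, he, hloop, rfl⟩
    have hbwd : arcRel ends F d (d e).2 (d e).1 := ⟨f, hf, hfl, Prod.ext h₂.symm h₁.symm⟩
    exact absurd ((Relation.TransGen.single hfwd).tail hbwd) (hac _)

theorem arcRel_univ_eq_of_parallel (hef : e ≠ f) (hloop : ¬ (ends e).IsDiag)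
    (hde : d f = d e) : arcRel ends Set.univ d = arcRel ends {g | g ≠ f} d := by
  funext u v
  refine propext ⟨fun ⟨g, _, hdiag, hgd⟩ => ?_, fun ⟨g, _, hdiag, hgd⟩ => ⟨g, trivial, hdiag, hgd⟩⟩
  by_cases hgf : g = f
  · exact ⟨e, hef, hloop, by rwa [← hde, ← hgf]⟩
  · exact ⟨g, hgf, hdiag, hgd⟩

theorem isRootedAcyclicOrientation_univ_iff (hef : e ≠ f) (hpar : ends e = ends f)
    (hloop : ¬ (ends e).IsDiag) (hde : d f = d e) :
    IsRootedAcyclicOrientation ends Set.univ S d r ↔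
      IsRootedAcyclicOrientation ends {g | g ≠ f} S d r := by
  unfold IsRootedAcyclicOrientation AcyclicOn RootedAt
  rw [arcRel_univ_eq_of_parallel hef hloop hde]
  refine and_congr_left' ⟨fun h g hg => h g trivial, fun h g _ hg => ?_⟩
  by_cases hgf : g = f
  · subst hgf
    rw [hde, ← hpar]
    exact h e hef hloop
  · exact h g hgf hg

end Orientation

theorem exists_mul_le_and_one_sub_mul_le {a b S : ℝ} (ha : 0 ≤ a) (hb : 0 ≤ b)
    (hSab : S ≤ a + b) : ∃ c, 0 ≤ c ∧ c ≤ 1 ∧ c * S ≤ a ∧ (1 - c) * S ≤ b := by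
  rcases (add_nonneg ha hb).eq_or_lt with hab | hab
  · exact ⟨0, le_rfl, zero_le_one, by linarith, by linarith⟩
  refine ⟨a / (a + b), by positivity, (div_le_one hab).2 (by linarith), ?_, ?_⟩
  · rw [div_mul_eq_mul_div, div_le_iff₀ hab]
    nlinarith
  · rw [one_sub_div hab.ne', add_sub_cancel_left, div_mul_eq_mul_div, div_le_iff₀ hab]
    nlinarith

noncomputable def mergeWeight (w : E → ℝ) (e f : E) (g : E) : ℝ :=
  if g = e then w e + w f else w g

section Packing

variable {ends : E → Sym2 V} {S : Set V} {d : E → V × V} {r : V} {w : E → ℝ} {e f : E}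
  {t : ℕ} {lam : Fin t → ℝ} {A : Fin t → Set E}

theorem IsPacking.congr {F : Set E} {d' : E → V × V} (hP : IsPacking ends F S d' r w lam A)
    (h : ∀ g ∈ F, d g = d' g) : IsPacking ends F S d r w lam A :=
  ⟨hP.1, fun i => (hP.2.1 i).congr h, hP.2.2⟩

theorem IsPacking.merge (hP : IsPacking ends Set.univ S d r w lam A) (hef : e ≠ f)
    (hloop : ¬ (ends e).IsDiag) (hde : d f = d e) :
    IsPacking ends {g | g ≠ f} S d r (mergeWeight w e f) lam (fun i => swapEdge f e (A i)) := by
  obtain ⟨hlam, hA, hcap⟩ := hP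
  refine ⟨hlam, fun i => (hA i).swapEdge hde hloop fun g hg => ?_, fun g hg => ?_⟩
  · rcases mem_swapEdge.1 hg with ⟨-, hgf⟩ | ⟨rfl, -⟩
    exacts [hgf, hef]
  by_cases hge : g = e
  · subst hge
    calc load lam (fun i => swapEdge f g (A i)) g ≤ load lam A g + load lam A f :=
          load_swapEdge_right_le hlam
      _ ≤ mergeWeight w g f g := by
          rw [mergeWeight, if_pos rfl]
          exact add_le_add (hcap g trivial) (hcap f trivial)
  · rw [mergeWeight, if_neg hge, load_swapEdge_of_ne hg hge]
    exact hcap g trivial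

theorem IsPacking.split (hP : IsPacking ends {g | g ≠ f} S d r (mergeWeight w e f) lam A)
    (hw : ∀ g, 0 ≤ w g) (hef : e ≠ f) (hfl : ¬ (ends f).IsDiag) (hde : d e = d f) :
    ∃ (t' : ℕ) (lam' : Fin t' → ℝ) (A' : Fin t' → Set E),
      IsPacking ends Set.univ S d r w lam' A' ∧ ∑ i, lam' i = ∑ i, lam i := by
  obtain ⟨hlam, hA, hcap⟩ := hP
  have hfA : ∀ i, f ∉ A i := fun i hf => (hA i).1 hf rfl
  have hload : load lam A e ≤ w e + w f := by simpa [mergeWeight] using hcap e hef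
  obtain ⟨c, hc0, hc1, hce, hcf⟩ :=
    exists_mul_le_and_one_sub_mul_le (hw e) (hw f) hload
  refine ⟨t + t, Fin.append (fun i => c * lam i) (fun i => (1 - c) * lam i),
    Fin.append A (fun i => swapEdge e f (A i)), ⟨fun k => ?_, fun k => ?_, fun g _ => ?_⟩, ?_⟩
  · refine Fin.addCases (fun i => ?_) (fun i => ?_) k
    · rw [Fin.append_left]
      exact mul_nonneg hc0 (hlam i)
    · rw [Fin.append_right]
      exact mul_nonneg (sub_nonneg.2 hc1) (hlam i)
  · refine Fin.addCases (fun i => ?_) (fun i => ?_) k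
    · rw [Fin.append_left]
      exact (hA i).mono_edges (Set.subset_univ _)
    · rw [Fin.append_right]
      exact (hA i).swapEdge hde hfl (Set.subset_univ _)
  · rw [load_append, load_mul_left, load_mul_left]
    by_cases hge : g = e
    · rw [hge, load_swapEdge_left hef]
      linarith
    by_cases hgf : g = f
    · have hswap := load_swapEdge_right_le (a := e) (b := f) (A := A) hlam
      rw [load_eq_zero_of_notMem hfA] at hswap
      rw [hgf, load_eq_zero_of_notMem hfA]
      nlinarith
    · have := hcap g hgf
      rw [mergeWeight, if_neg hge] at this
      rw [load_swapEdge_of_ne hge hgf]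
      linarith
  · rw [Fin.sum_univ_add]
    simp only [Fin.append_left, Fin.append_right, ← Finset.mul_sum]
    ring

end Packing

theorem stmt_4_general [Fintype E] (ends : E → Sym2 V) (w : E → ℝ)
    (hw : ∀ e, 0 ≤ w e) (e f : E) (hef : e ≠ f) (hpar : ends e = ends f)
    (hloop : ¬ (ends e).IsDiag) (r : V) :
    kOn ends Set.univ Set.univ w r =
      kOn ends {g | g ≠ f} Set.univ (fun g => if g = e then w e + w f else w g) r := by
  rw [kOn_eq_sSup_packingValues, kOn_eq_sSup_packingValues]
  congr 1
  ext x
  constructor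
  · rintro ⟨d, hd, t, lam, A, hP, rfl⟩
    have hde : d f = d e := hd.2.1.eq_of_parallel hd.1 trivial trivial hpar hloop
    exact ⟨d, (isRootedAcyclicOrientation_univ_iff hef hpar hloop hde).1 hd, t, lam, _,
      hP.merge hef hloop hde, rfl⟩
  · rintro ⟨d', hd', t, lam, A, hP, rfl⟩
    set d := Function.update d' f (d' e)
    have hdd' : ∀ g ∈ {g | g ≠ f}, d g = d' g := fun g hg => Function.update_of_ne hg _ _
    have hde : d f = d e := by simp [d, hef]
    obtain ⟨t', lam', A', hP', hsum⟩ :=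
      (hP.congr hdd').split hw hef (hpar ▸ hloop) hde.symm
    exact ⟨d, (isRootedAcyclicOrientation_univ_iff hef hpar hloop hde).2 (hd'.congr hdd'), t',
      lam', A', hP', hsum.symm⟩

/-- Merging two parallel edges `e, f` (deleting `f` and adding its weight
to `e`) does not change the maximum, over `r`-acyclic orientations, of the maximum
weighted packing of `r`-arborescences: `k(G, w, r) = k(G \ f, w_f, r)`. -/
theorem stmt_4 [Fintype V] [Fintype E] (ends : E → Sym2 V) (w : E → ℝ)
    (hw : ∀ e, 0 ≤ w e) (e f : E) (hef : e ≠ f) (hpar : ends e = ends f)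
    (hloop : ¬ (ends e).IsDiag) (r : V) :
    kOn ends Set.univ Set.univ w r =
      kOn ends {g | g ≠ f} Set.univ (fun g => if g = e then w e + w f else w g) r :=
  stmt_4_general ends w hw e f hef hpar hloop r
end

section
/- Let C_n (n ≥ 3) be a cycle with nonnegative edge weights w, and let e₁, e₂ be edges with the smallest and second-smallest weights. If e₁ and e₂ share a vertex s, then k(C_n, w) = min{ w(e₁) + w(e₂), w(e₃) }, where e₃ is a third-smallest-weight edge; the optimum is achieved by orienting all edges toward s from any root r ≠ s. -/
/-!
For an orientation of `C_n` rooted at `r`, every arborescence of a packing has an arc entering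
each `v ≠ r`, so the value of the packing is at most the weight of the arcs entering `v`. The
`n` arcs enter the `n - 1` vertices other than `r`, each at least once, so at most one vertex
is entered twice. Of two edges with different heads, one is therefore the only arc entering its
head and bounds the value by its weight; two edges with the same head are the only arcs
entering it. Applied to `e₁, e₂` and to `e₁, e₂, e₃`, this gives the upper bound
`K = min (w e₁ + w e₂) (w e₃)`.

Conversely, for `r ≠ c` orient every edge upwards for `height r c`. Then `c` is the sink,
entered by `e₁` and `e₂`, and deleting either of them leaves a spanning `r`-arborescence.
Weighting these two by `min (w e₁) K` and `K - min (w e₁) K` respects every capacity.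
-/

open scoped Classical

variable {V E : Type*}

/-- The cycle `C_n`: vertex `i` is joined to `i + 1` (mod `n`) by edge `i`. -/
def cycEnds (n : ℕ) [NeZero n] : Fin n → Sym2 (Fin n) := fun i => s(i, i + 1)

open Finset

noncomputable def inEdges [Fintype E] (d : E → V × V) (v : V) : Finset E := {e | (d e).2 = v}

@[simp]
lemma mem_inEdges [Fintype E] {d : E → V × V} {v : V} {e : E} :
    e ∈ inEdges d v ↔ (d e).2 = v := by
  simp [inEdges]

lemma sum_le_sum_of_forall_exists_mem {ι : Type*} [Fintype ι] {lam : ι → ℝ}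
    (hlam : ∀ i, 0 ≤ lam i) {A : ι → Set E} {w : E → ℝ} {T : Finset E}
    (hcap : ∀ e ∈ T, ∑ i, (if e ∈ A i then lam i else 0) ≤ w e)
    (hT : ∀ i, ∃ e ∈ T, e ∈ A i) :
    ∑ i, lam i ≤ ∑ e ∈ T, w e :=
  calc ∑ i, lam i ≤ ∑ i, ∑ e ∈ T, (if e ∈ A i then lam i else 0) := by
        refine sum_le_sum fun i _ => ?_
        obtain ⟨e, heT, heA⟩ := hT i
        calc lam i = if e ∈ A i then lam i else 0 := (if_pos heA).symm
          _ ≤ _ := single_le_sum (f := fun e => if e ∈ A i then lam i else 0)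
                (fun e _ => by split_ifs <;> simp [hlam i]) heT
    _ = ∑ e ∈ T, ∑ i, (if e ∈ A i then lam i else 0) := sum_comm
    _ ≤ ∑ e ∈ T, w e := sum_le_sum hcap

lemma sum_le_sum_inEdges_of_isArbM [Fintype E] {ends : E → Sym2 V} {F : Set E} {S : Set V}
    {d : E → V × V} {r : V} {t : ℕ} {lam : Fin t → ℝ} {A : Fin t → Set E} {w : E → ℝ}
    (hlam : ∀ i, 0 ≤ lam i) (hArb : ∀ i, IsArbM ends F S d r (A i))
    (hcap : ∀ e, ∑ i, (if e ∈ A i then lam i else 0) ≤ w e)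
    {v : V} (hvS : v ∈ S) (hvr : v ≠ r) :
    ∑ i, lam i ≤ ∑ e ∈ inEdges d v, w e :=
  sum_le_sum_of_forall_exists_mem hlam (fun e _ => hcap e) fun i => by
    obtain ⟨e, ⟨heA, hev⟩, -⟩ := (hArb i).2.2.1 v hvS hvr
    exact ⟨e, mem_inEdges.2 hev, heA⟩

lemma card_fiber_le_one_or {α β : Type*} [Fintype α] [Fintype β] {f : α → β}
    (hcard : Fintype.card α = Fintype.card β) {r : β} (hr : ∀ a, f a ≠ r)
    (hsurj : ∀ b, b ≠ r → ∃ a, f a = b) {u v : β} (huv : u ≠ v) (hur : u ≠ r) (hvr : v ≠ r) :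
    #{a | f a = u} ≤ 1 ∨ #{a | f a = v} ≤ 1 := by
  by_contra! h
  have hfib : ∀ b, 1 + (if b = u then 1 else 0) + (if b = v then 1 else 0)
      ≤ #{a | f a = b} + (if b = r then 1 else 0) := by
    intro b
    have hpos : b ≠ r → 0 < #{a | f a = b} := fun hb => by
      obtain ⟨a, ha⟩ := hsurj b hb
      exact card_pos.2 ⟨a, by simp [ha]⟩
    split_ifs <;> subst_vars <;> simp_all <;> omega
  have := sum_le_sum fun b (_ : b ∈ (univ : Finset β)) => hfib b
  simp only [sum_add_distrib, sum_ite_eq', mem_univ, if_true, sum_const, card_univ,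
    smul_eq_mul, mul_one] at this
  rw [← card_eq_sum_card_fiberwise (fun a _ => mem_univ (f a)), card_univ, hcard] at this
  omega

open Relation in
lemma isArbM_univ_of_existsUnique [Finite V] {ends : E → Sym2 V} {F : Set E} {d : E → V × V}
    {r : V} {A : Set E} (hacyc : AcyclicOn ends F d) (hAF : A ⊆ F)
    (hdiag : ∀ e ∈ A, ¬ (ends e).IsDiag) (hin : ∀ v, v ≠ r → ∃! e, e ∈ A ∧ (d e).2 = v)
    (hr : ∀ e ∈ A, (d e).2 ≠ r) :
    IsArbM ends F Set.univ d r A := by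
  refine ⟨hAF, hdiag, fun v _ => hin v, fun e he => ⟨trivial, trivial, hr e he⟩, fun v _ => ?_⟩
  clear ‹v ∈ Set.univ›
  have : IsTrans V (TransGen (arcRel ends F d)) := ⟨fun _ _ _ => TransGen.trans⟩
  have : Std.Irrefl (TransGen (arcRel ends F d)) := ⟨hacyc⟩
  induction v using (Finite.wellFounded_of_trans_of_irrefl (TransGen (arcRel ends F d))).induction
    with
  | _ v ih =>
    by_cases hvr : v = r
    · exact hvr ▸ ReflTransGen.refl
    obtain ⟨e, ⟨heA, hev⟩, -⟩ := hin v hvr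
    have hd : d e = ((d e).1, v) := by rw [← hev]
    exact (ih _ (TransGen.single ⟨e, hAF heA, hdiag e heA, hd⟩)).tail ⟨e, heA, hd⟩

open Relation in
lemma acyclicOn_of_arcRel_lt {β : Type*} [Preorder β] {ends : E → Sym2 V} {F : Set E}
    {d : E → V × V} (φ : V → β) (h : ∀ u v, arcRel ends F d u v → φ u < φ v) :
    AcyclicOn ends F d := by
  have key : ∀ u v, TransGen (arcRel ends F d) u v → φ u < φ v := fun u v huv => by
    induction huv with
    | single huv => exact h _ _ huv
    | tail _ hbc ih => exact ih.trans (h _ _ hbc)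
  exact fun v hv => lt_irrefl _ (key v v hv)

section Cycle

variable {n : ℕ}

def fwdDist (r v : Fin n) : ℕ := (v - r).val

lemma fwdDist_lt (r v : Fin n) : fwdDist r v < n := (v - r).isLt

variable [NeZero n]

lemma Fin.add_one_ne_self_of_one_lt (hn : 1 < n) (v : Fin n) : v + 1 ≠ v := by
  rw [Ne, add_eq_left, Fin.ext_iff, Fin.val_one', Nat.mod_eq_of_lt hn]
  simp

lemma Fin.sub_one_ne_self_of_one_lt (hn : 1 < n) (v : Fin n) : v - 1 ≠ v := by
  simpa [sub_eq_iff_eq_add] using (Fin.add_one_ne_self_of_one_lt hn v).symm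

lemma fwdDist_eq_zero_iff {r v : Fin n} : fwdDist r v = 0 ↔ v = r := by
  simp [fwdDist, Fin.ext_iff, sub_eq_zero]

lemma fwdDist_add_one (hn : 1 < n) (r v : Fin n) :
    fwdDist r (v + 1) = fwdDist r v + 1 ∨ (fwdDist r v = n - 1 ∧ fwdDist r (v + 1) = 0) := by
  have hval : fwdDist r (v + 1) = (fwdDist r v + 1) % n := by
    rw [fwdDist, add_sub_right_comm, Fin.val_add, Fin.val_one', Nat.mod_eq_of_lt hn]; rfl
  have := fwdDist_lt r v
  rcases Nat.lt_or_ge (fwdDist r v + 1) n with h | h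
  · exact .inl (hval.trans (Nat.mod_eq_of_lt h))
  · have hv : fwdDist r v + 1 = n := by omega
    exact .inr ⟨by omega, by rw [hval, hv, Nat.mod_self]⟩

lemma fwdDist_sub_one (hn : 1 < n) {r v : Fin n} (hv : v ≠ r) :
    fwdDist r (v - 1) + 1 = fwdDist r v := by
  rcases fwdDist_add_one hn r (v - 1) with h | h <;> rw [sub_add_cancel] at h
  · exact h.symm
  · exact absurd (fwdDist_eq_zero_iff.1 h.2) hv

lemma cycEnds_not_isDiag (hn : 1 < n) (e : Fin n) : ¬ (cycEnds n e).IsDiag := by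
  simpa [cycEnds] using (Fin.add_one_ne_self_of_one_lt hn e).symm

lemma mem_cycEnds_iff {v e : Fin n} : v ∈ cycEnds n e ↔ e = v - 1 ∨ e = v := by
  rw [cycEnds, Sym2.mem_iff, eq_sub_iff_add_eq, eq_comm (a := v), eq_comm (a := v)]
  exact or_comm

lemma inEdges_subset {d : Fin n → Fin n × Fin n} (hn : 1 < n)
    (hOr : IsOrientation (cycEnds n) Set.univ d) (v : Fin n) : inEdges d v ⊆ {v - 1, v} := by
  intro e he
  have hends := hOr e trivial (cycEnds_not_isDiag hn e)
  rw [mem_inEdges] at he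
  rw [mem_insert, mem_singleton, ← mem_cycEnds_iff, hends, he]
  exact Sym2.mem_mk_right _ _

lemma card_inEdges_le_two {d : Fin n → Fin n × Fin n} (hn : 1 < n)
    (hOr : IsOrientation (cycEnds n) Set.univ d) (v : Fin n) : #(inEdges d v) ≤ 2 :=
  (card_le_card (inEdges_subset hn hOr v)).trans card_le_two

section Rooted

variable {d : Fin n → Fin n × Fin n} {r : Fin n}

lemma head_ne_root (hn : 1 < n) (hroot : RootedAt (cycEnds n) Set.univ Set.univ d r)
    (e : Fin n) : (d e).2 ≠ r := fun h =>
  hroot.2.1 (d e).1 ⟨e, trivial, cycEnds_not_isDiag hn e, by rw [← h]⟩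

lemma exists_head_eq (hroot : RootedAt (cycEnds n) Set.univ Set.univ d r) {v : Fin n}
    (hv : v ≠ r) : ∃ e, (d e).2 = v := by
  by_contra! h
  exact hv (hroot.2.2 v trivial fun u ⟨e, _, _, he⟩ => h e (by rw [he]))

lemma card_inEdges_le_one_or (hn : 1 < n) (hroot : RootedAt (cycEnds n) Set.univ Set.univ d r)
    {u v : Fin n} (huv : u ≠ v) (hur : u ≠ r) (hvr : v ≠ r) :
    #(inEdges d u) ≤ 1 ∨ #(inEdges d v) ≤ 1 :=
  card_fiber_le_one_or rfl (head_ne_root hn hroot) (fun _ => exists_head_eq hroot) huv hur hvr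

lemma le_of_card_inEdges_le_one (hn : 1 < n) (hroot : RootedAt (cycEnds n) Set.univ Set.univ d r)
    {w : Fin n → ℝ} {x : ℝ} (hx : ∀ v, v ≠ r → x ≤ ∑ e ∈ inEdges d v, w e) {e : Fin n}
    (he : #(inEdges d (d e).2) ≤ 1) : x ≤ w e := by
  have he_mem : e ∈ inEdges d (d e).2 := mem_inEdges.2 rfl
  have : inEdges d (d e).2 = {e} :=
    eq_singleton_iff_unique_mem.2 ⟨he_mem, fun e' he' => card_le_one.1 he _ he' _ he_mem⟩
  simpa [this] using hx _ (head_ne_root hn hroot e)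

end Rooted

lemma le_min_of_le_sum_inEdges (hn : 1 < n) {w : Fin n → ℝ} (hw : ∀ e, 0 ≤ w e)
    {e₁ e₂ e₃ : Fin n} (h12 : e₁ ≠ e₂) (h13 : e₁ ≠ e₃) (h23 : e₂ ≠ e₃)
    (hw12 : w e₁ ≤ w e₂) (hw23 : w e₂ ≤ w e₃) {d : Fin n → Fin n × Fin n} {r : Fin n}
    (hOr : IsOrientation (cycEnds n) Set.univ d)
    (hroot : RootedAt (cycEnds n) Set.univ Set.univ d r)
    {x : ℝ} (hx : ∀ v, v ≠ r → x ≤ ∑ e ∈ inEdges d v, w e) :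
    x ≤ min (w e₁ + w e₂) (w e₃) := by
  have hsplit : ∀ {e e'}, (d e).2 ≠ (d e').2 → x ≤ w e ∨ x ≤ w e' := fun h =>
    (card_inEdges_le_one_or hn hroot h (head_ne_root hn hroot _) (head_ne_root hn hroot _)).imp
      (le_of_card_inEdges_le_one hn hroot hx) (le_of_card_inEdges_le_one hn hroot hx)
  refine le_min ?_ ?_
  · by_cases h : (d e₁).2 = (d e₂).2
    · have hsub : {e₁, e₂} ⊆ inEdges d (d e₁).2 := by
        simp [insert_subset_iff, h]
      have heq := eq_of_subset_of_card_le hsub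
        ((card_inEdges_le_two hn hOr _).trans (card_pair h12).ge)
      simpa [← heq, sum_pair h12] using hx _ (head_ne_root hn hroot e₁)
    · rcases hsplit h with h | h <;> linarith [hw e₁, hw e₂]
  · by_cases h : (d e₁).2 = (d e₂).2
    · by_cases h' : (d e₁).2 = (d e₃).2
      · have hsub : {e₁, e₂, e₃} ⊆ inEdges d (d e₁).2 := by
          simp [insert_subset_iff, ← h, ← h']
        have := (card_le_card hsub).trans (card_inEdges_le_two hn hOr _)
        rw [card_eq_three.2 ⟨e₁, e₂, e₃, h12, h13, h23, rfl⟩] at this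
        omega
      · rcases hsplit h' with h | h <;> linarith
    · rcases hsplit h with h | h <;> linarith

def cycOrientBy (φ : Fin n → ℕ) (e : Fin n) : Fin n × Fin n :=
  if φ e < φ (e + 1) then (e, e + 1) else (e + 1, e)

section OrientBy

variable {φ : Fin n → ℕ}

lemma isOrientation_cycOrientBy (F : Set (Fin n)) :
    IsOrientation (cycEnds n) F (cycOrientBy φ) := fun e _ _ => by
  unfold cycOrientBy
  split
  · rfl
  · exact Sym2.eq_swap

lemma cycOrientBy_sub_one {v : Fin n} (h : φ (v - 1) < φ v) :
    cycOrientBy φ (v - 1) = (v - 1, v) := by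
  simp [cycOrientBy, h]

lemma cycOrientBy_self {v : Fin n} (h : φ (v + 1) < φ v) : cycOrientBy φ v = (v + 1, v) := by
  simp [cycOrientBy, h.not_gt]

lemma lt_of_arcRel_cycOrientBy (hφ : ∀ e, φ e ≠ φ (e + 1)) {F : Set (Fin n)} {u v : Fin n}
    (h : arcRel (cycEnds n) F (cycOrientBy φ) u v) : φ u < φ v := by
  obtain ⟨e, -, -, he⟩ := h
  unfold cycOrientBy at he
  split at he <;> obtain ⟨rfl, rfl⟩ := Prod.mk.inj he
  · assumption
  · exact lt_of_le_of_ne (not_lt.1 ‹_›) (hφ e).symm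

lemma rootedAt_cycOrientBy (hn : 1 < n) (hφ : ∀ e, φ e ≠ φ (e + 1)) {r : Fin n}
    (hr : ∀ v, φ r ≤ φ v) (hdesc : ∀ v, v ≠ r → φ (v - 1) < φ v ∨ φ (v + 1) < φ v) :
    RootedAt (cycEnds n) Set.univ Set.univ (cycOrientBy φ) r := by
  refine ⟨trivial, fun u h => (lt_of_arcRel_cycOrientBy hφ h).not_ge (hr u), fun v _ hv => ?_⟩
  by_contra hvr
  rcases hdesc v hvr with h | h
  · exact hv _ ⟨v - 1, trivial, cycEnds_not_isDiag hn _, cycOrientBy_sub_one h⟩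
  · exact hv _ ⟨v, trivial, cycEnds_not_isDiag hn _, cycOrientBy_self h⟩

end OrientBy

section Height

-- strictly increasing from `0` at `r` to its maximum `n` at `c` along both paths of the cycle
def height (r c v : Fin n) : ℕ :=
  if fwdDist r v < fwdDist r c then fwdDist r v
  else if fwdDist r v = fwdDist r c then n else n - fwdDist r v

variable {r c : Fin n}

lemma height_ne_height_add_one (hn : 1 < n) (hrc : r ≠ c) (e : Fin n) :
    height r c e ≠ height r c (e + 1) := by
  have hc : fwdDist r c ≠ 0 := mt fwdDist_eq_zero_iff.1 hrc.symm
  have := fwdDist_lt r c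
  have := fwdDist_lt r e
  have := fwdDist_add_one hn r e
  unfold height
  split_ifs <;> omega

lemma height_root (hrc : r ≠ c) : height r c r = 0 := by
  have hc : fwdDist r c ≠ 0 := mt fwdDist_eq_zero_iff.1 hrc.symm
  have hr : fwdDist r r = 0 := fwdDist_eq_zero_iff.2 rfl
  simp only [height, hr]
  split_ifs <;> omega

lemma height_descends (hn : 1 < n) (hrc : r ≠ c) {v : Fin n} (hv : v ≠ r) :
    height r c (v - 1) < height r c v ∨ height r c (v + 1) < height r c v := by
  have hc : fwdDist r c ≠ 0 := mt fwdDist_eq_zero_iff.1 hrc.symm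
  have := fwdDist_lt r c
  have := fwdDist_lt r v
  have := fwdDist_sub_one hn hv
  have := fwdDist_add_one hn r v
  unfold height
  split_ifs <;> omega

lemma height_sub_one_lt (hn : 1 < n) (hrc : r ≠ c) : height r c (c - 1) < height r c c := by
  have := fwdDist_lt r c
  have := fwdDist_sub_one hn hrc.symm
  unfold height
  split_ifs <;> omega

lemma height_add_one_lt (hn : 1 < n) (hrc : r ≠ c) : height r c (c + 1) < height r c c := by
  have hc : fwdDist r c ≠ 0 := mt fwdDist_eq_zero_iff.1 hrc.symm
  have := fwdDist_lt r c
  have := fwdDist_add_one hn r c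
  unfold height
  split_ifs <;> omega

end Height

lemma isArbM_compl_of_sink (hn : 1 < n) {d : Fin n → Fin n × Fin n} {r s g : Fin n}
    (hOr : IsOrientation (cycEnds n) Set.univ d) (hacyc : AcyclicOn (cycEnds n) Set.univ d)
    (hroot : RootedAt (cycEnds n) Set.univ Set.univ d r)
    (hs₁ : (d (s - 1)).2 = s) (hs₂ : (d s).2 = s) (hg : (d g).2 = s) :
    IsArbM (cycEnds n) Set.univ Set.univ d r {e | e ≠ g} := by
  have hsr : s ≠ r := hs₂ ▸ head_ne_root hn hroot s
  have hcard_s : #(inEdges d s) = 2 := by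
    refine le_antisymm (card_inEdges_le_two hn hOr s) ?_
    have hsub : {s - 1, s} ⊆ inEdges d s := by simp [insert_subset_iff, hs₁, hs₂]
    exact (card_pair (Fin.sub_one_ne_self_of_one_lt hn s)).ge.trans (card_le_card hsub)
  have hone : ∀ v, v ≠ r → #((inEdges d v).erase g) = 1 := by
    intro v hv
    by_cases hvs : v = s
    · rw [hvs, card_erase_of_mem (mem_inEdges.2 hg), hcard_s]
    · have hgv : g ∉ inEdges d v := by simpa [hg] using Ne.symm hvs
      obtain ⟨e, he⟩ := exists_head_eq hroot hv
      rw [erase_eq_of_notMem hgv]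
      exact le_antisymm ((card_inEdges_le_one_or hn hroot hvs hv hsr).resolve_right (by omega))
        (card_pos.2 ⟨e, mem_inEdges.2 he⟩)
  refine isArbM_univ_of_existsUnique hacyc (Set.subset_univ _)
    (fun e _ => cycEnds_not_isDiag hn e) (fun v hv => ?_) (fun e _ => head_ne_root hn hroot e)
  obtain ⟨e₀, he₀⟩ := card_eq_one.1 (hone v hv)
  have hiff : ∀ e, (e ∈ {e | e ≠ g} ∧ (d e).2 = v) ↔ e = e₀ := fun e => by
    simpa [and_comm] using Finset.ext_iff.1 he₀ e
  exact ⟨e₀, (hiff e₀).2 rfl, fun e he => (hiff e).1 he⟩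

lemma exists_packing_eq_min (hn : 1 < n) {w : Fin n → ℝ} (hw : ∀ e, 0 ≤ w e)
    {e₁ e₂ e₃ : Fin n} (h12 : e₁ ≠ e₂) (hmin : ∀ e, e ≠ e₁ → e ≠ e₂ → e ≠ e₃ → w e₃ ≤ w e)
    {c : Fin n} (hc1 : c ∈ cycEnds n e₁) (hc2 : c ∈ cycEnds n e₂) {r : Fin n} (hrc : r ≠ c) :
    ∃ d : Fin n → Fin n × Fin n, IsOrientation (cycEnds n) Set.univ d ∧
      AcyclicOn (cycEnds n) Set.univ d ∧ RootedAt (cycEnds n) Set.univ Set.univ d r ∧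
      ∃ (t : ℕ) (lam : Fin t → ℝ) (A : Fin t → Set (Fin n)),
        (∀ i, 0 ≤ lam i) ∧ (∀ i, IsArbM (cycEnds n) Set.univ Set.univ d r (A i)) ∧
        (∀ e ∈ Set.univ, ∑ i, (if e ∈ A i then lam i else 0) ≤ w e) ∧
        min (w e₁ + w e₂) (w e₃) = ∑ i, lam i := by
  set d := cycOrientBy (height r c)
  have hφ := height_ne_height_add_one hn hrc
  have hOr : IsOrientation (cycEnds n) Set.univ d := isOrientation_cycOrientBy _
  have hacyc : AcyclicOn (cycEnds n) Set.univ d :=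
    acyclicOn_of_arcRel_lt (height r c) fun _ _ => lt_of_arcRel_cycOrientBy hφ
  have hroot : RootedAt (cycEnds n) Set.univ Set.univ d r :=
    rootedAt_cycOrientBy hn hφ (fun v => height_root hrc ▸ Nat.zero_le _)
      fun _ hv => height_descends hn hrc hv
  have hs₁ : (d (c - 1)).2 = c := by simp only [d, cycOrientBy_sub_one (height_sub_one_lt hn hrc)]
  have hs₂ : (d c).2 = c := by simp only [d, cycOrientBy_self (height_add_one_lt hn hrc)]
  have harb : ∀ g, c ∈ cycEnds n g → IsArbM (cycEnds n) Set.univ Set.univ d r {e | e ≠ g} :=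
    fun g hg => isArbM_compl_of_sink hn hOr hacyc hroot hs₁ hs₂ <| by
      rcases mem_cycEnds_iff.1 hg with rfl | rfl
      exacts [hs₁, hs₂]
  set K := min (w e₁ + w e₂) (w e₃)
  have hK₁₂ : K ≤ w e₁ + w e₂ := min_le_left _ _
  have hK₃ : K ≤ w e₃ := min_le_right _ _
  refine ⟨d, hOr, hacyc, hroot, 2, ![min (w e₁) K, K - min (w e₁) K],
    ![{e | e ≠ e₂}, {e | e ≠ e₁}], ?_, ?_, fun e _ => ?_, ?_⟩
  · have hK : 0 ≤ K := le_min (add_nonneg (hw e₁) (hw e₂)) (hw e₃)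
    simpa [Fin.forall_fin_two] using ⟨hw e₁, hK⟩
  · simpa [Fin.forall_fin_two] using ⟨harb e₂ hc2, harb e₁ hc1⟩
  · simp only [Fin.sum_univ_two, Matrix.cons_val_zero, Matrix.cons_val_one, Set.mem_ofPred_eq]
    by_cases he₁ : e = e₁
    · subst he₁
      simp [h12]
    by_cases he₂ : e = e₂
    · subst he₂
      simp only [ne_eq, not_true_eq_false, if_false, he₁, not_false_eq_true, if_true, zero_add]
      rcases min_cases (w e₁) K with h | h <;> linarith [hw e]
    · simp only [ne_eq, he₁, he₂, not_false_eq_true, if_true, add_sub_cancel]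
      by_cases he₃ : e = e₃
      · exact he₃ ▸ hK₃
      · exact hK₃.trans (hmin e he₁ he₂ he₃)
  · simp [Fin.sum_univ_two]

end Cycle

/-- In the cycle `C_n` (`n ≥ 3`) with nonnegative weights, if the two
cheapest edges `e₁, e₂` share a vertex `c` (and `e₃` is a third-cheapest edge), then
`k(C_n, w) = min (w e₁ + w e₂) (w e₃)`, and this value is achieved for every root
`r ≠ c` (orienting all edges toward the sink `c`). -/
theorem stmt_9 {n : ℕ} [NeZero n] (hn : 3 ≤ n) (w : Fin n → ℝ) (hw : ∀ e, 0 ≤ w e)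
    (e₁ e₂ e₃ : Fin n) (h12 : e₁ ≠ e₂) (h13 : e₁ ≠ e₃) (h23 : e₂ ≠ e₃)
    (hw12 : w e₁ ≤ w e₂) (hw23 : w e₂ ≤ w e₃)
    (hmin : ∀ e, e ≠ e₁ → e ≠ e₂ → e ≠ e₃ → w e₃ ≤ w e)
    (c : Fin n) (hc1 : c ∈ cycEnds n e₁) (hc2 : c ∈ cycEnds n e₂) :
    kAll (cycEnds n) Set.univ Set.univ w = min (w e₁ + w e₂) (w e₃) ∧
    ∀ r : Fin n, r ≠ c →
      kOn (cycEnds n) Set.univ Set.univ w r = min (w e₁ + w e₂) (w e₃) := by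
  have hn' : 1 < n := by omega
  set K := min (w e₁ + w e₂) (w e₃)
  have hK : 0 ≤ K := le_min (add_nonneg (hw e₁) (hw e₂)) (hw e₃)
  have hvalues : ∀ r, ∃ S : Set ℝ, kOn (cycEnds n) Set.univ Set.univ w r = sSup S ∧
      K ∈ upperBounds S ∧ (r ≠ c → K ∈ S) := fun r => by
    refine ⟨_, rfl, ?_, exists_packing_eq_min hn' hw h12 hmin hc1 hc2⟩
    rintro _ ⟨d, hOr, -, hroot, t, lam, A, hlam, hArb, hcap, rfl⟩
    exact le_min_of_le_sum_inEdges hn' hw h12 h13 h23 hw12 hw23 hOr hroot fun v hv =>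
      sum_le_sum_inEdges_of_isArbM hlam hArb (fun e => hcap e trivial) trivial hv
  have hle : ∀ r, kOn (cycEnds n) Set.univ Set.univ w r ≤ K := fun r => by
    obtain ⟨S, hS, hub, -⟩ := hvalues r
    exact hS ▸ Real.sSup_le hub hK
  have hkOn : ∀ r, r ≠ c → kOn (cycEnds n) Set.univ Set.univ w r = K := fun r hrc => by
    obtain ⟨S, hS, hub, hmem⟩ := hvalues r
    exact hS ▸ IsGreatest.csSup_eq ⟨hmem hrc, hub⟩
  refine ⟨IsGreatest.csSup_eq ⟨⟨c + 1, trivial, hkOn _ ?_⟩, ?_⟩, hkOn⟩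
  · exact Fin.add_one_ne_self_of_one_lt hn' c
  · rintro _ ⟨r, -, rfl⟩
    exact hle r
end

section
/- Let G be a simple 2-connected outerplanar graph with k chords (edges not on the outer cycle). For any root r and any r-acyclic orientation of G, the number of sinks of degree 2 is at most k + 1. -/
/-- `D` is an orientation of the simple graph `G`: every arc of `D` is along an edge of
`G`, and every edge of `G` is directed in exactly one of its two directions. -/
def IsOrientOf {V : Type*} (G : SimpleGraph V) (D : V → V → Prop) : Prop :=
  (∀ u v, D u v → G.Adj u v) ∧ ∀ u v, G.Adj u v → (D u v ↔ ¬ D v u)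

/-- `p` is an edge of the outer Hamiltonian cycle `0 − 1 − ⋯ − (n-1) − 0` of `Fin n`. -/
def IsCycEdge (n : ℕ) [NeZero n] (p : Sym2 (Fin n)) : Prop :=
  ∃ u : Fin n, p = s(u, u + 1)

/-- `{u, v}` is a chord of `G`: an edge that is not an outer-cycle edge. -/
def IsChord {n : ℕ} [NeZero n] (G : SimpleGraph (Fin n)) (u v : Fin n) : Prop :=
  G.Adj u v ∧ ¬ IsCycEdge n s(u, v)

/-- `G` is a 2-connected outerplanar graph presented with its vertices `0, 1, …, n-1`
in order along the outer Hamiltonian cycle: `G` contains all outer-cycle edges, and its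
chords are pairwise noncrossing. -/
def OuterHam (n : ℕ) [NeZero n] (G : SimpleGraph (Fin n)) : Prop :=
  (∀ u : Fin n, G.Adj u (u + 1)) ∧
  ∀ a b c d : Fin n, IsChord G a b → IsChord G c d →
    ¬ (a.val < c.val ∧ c.val < b.val ∧ b.val < d.val)

/-- The set of chords of `G` (as unordered edges). -/
def chordSet (n : ℕ) [NeZero n] (G : SimpleGraph (Fin n)) : Set (Sym2 (Fin n)) :=
  {p | p ∈ G.edgeSet ∧ ¬ IsCycEdge n p}

/-!
A sink `v` is in particular a local sink of the outer cycle: the arc `v - 1 → v` comes in and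
`v → v + 1` does not go out. Around the cycle, local sinks and local sources alternate, so
there are equally many of each (formally, `v ↦ v + 1` maps the tails of the forward cycle arcs
onto their heads). Every local source other than the root has an in-arc, which cannot be a cycle
edge and so is a chord, and different local sources give different chords because an
orientation has no 2-cycles.
-/

theorem IsOrientOf.asymm {V : Type*} {G : SimpleGraph V} {D : V → V → Prop}
    (hO : IsOrientOf G D) {u v : V} (h : D u v) : ¬ D v u :=
  (hO.2 u v (hO.1 u v h)).mp h

theorem IsOrientOf.of_not_rev {V : Type*} {G : SimpleGraph V} {D : V → V → Prop}
    (hO : IsOrientOf G D) {u v : V} (hadj : G.Adj u v) (h : ¬ D v u) : D u v :=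
  (hO.2 u v hadj).mpr h

section CycleOrientation

variable {n : ℕ} [NeZero n]

def cycLocalSinks (D : Fin n → Fin n → Prop) : Set (Fin n) :=
  {v | D (v - 1) v ∧ ¬ D v (v + 1)}

def cycLocalSources (D : Fin n → Fin n → Prop) : Set (Fin n) :=
  {v | D v (v + 1) ∧ ¬ D (v - 1) v}

theorem ncard_cycLocalSinks_eq (D : Fin n → Fin n → Prop) :
    (cycLocalSinks D).ncard = (cycLocalSources D).ncard := by
  set tails : Set (Fin n) := {v | D v (v + 1)}
  have heads : {v : Fin n | D (v - 1) v} = (· + 1) '' tails := by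
    ext v
    exact ⟨fun hv => ⟨v - 1, by simpa [tails] using hv, sub_add_cancel v 1⟩,
      by rintro ⟨u, hu, rfl⟩; simpa [tails] using hu⟩
  have hcard : {v : Fin n | D (v - 1) v}.ncard = tails.ncard := by
    rw [heads, Set.ncard_image_of_injective _ (add_left_injective 1)]
  exact (Set.ncard_eq_ncard_iff_ncard_sdiff_eq_ncard_sdiff).mp hcard

variable {G : SimpleGraph (Fin n)} {D : Fin n → Fin n → Prop}

theorem mem_cycLocalSinks_of_sink (hcyc : ∀ u : Fin n, G.Adj u (u + 1)) (hO : IsOrientOf G D)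
    {v : Fin n} (hv : ∀ u, ¬ D v u) : v ∈ cycLocalSinks D :=
  ⟨hO.of_not_rev (by simpa using hcyc (v - 1)) (hv _), hv _⟩

theorem mk_mem_chordSet_of_mem_cycLocalSources (hO : IsOrientOf G D) {u v : Fin n}
    (hv : v ∈ cycLocalSources D) (huv : D u v) : s(u, v) ∈ chordSet n G := by
  refine ⟨hO.1 u v huv, ?_⟩
  rintro ⟨w, hw⟩
  rcases Sym2.eq_iff.mp hw with ⟨rfl, rfl⟩ | ⟨rfl, rfl⟩
  · exact hv.2 (by simpa using huv)
  · exact hO.asymm hv.1 huv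

theorem ncard_cycLocalSources_le_ncard_chordSet_add_one (hO : IsOrientOf G D) {r : Fin n}
    (hsrc : ∀ v, (∀ u, ¬ D u v) → v = r) :
    (cycLocalSources D).ncard ≤ (chordSet n G).ncard + 1 := by
  have hpred : ∀ v ∈ cycLocalSources D \ {r}, ∃ u, D u v := by
    rintro v ⟨-, hvr⟩
    by_contra! h
    exact hvr (hsrc v h)
  choose! pred hpred using hpred
  have hinj : Set.InjOn (fun v => s(pred v, v)) (cycLocalSources D \ {r}) := by
    intro v hv w hw heq
    rcases Sym2.eq_iff.mp heq with ⟨-, h⟩ | ⟨hpv, hpw⟩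
    · exact h
    · have hvw : D v w := hpw ▸ hpred w hw
      exact (hO.asymm hvw (hpv ▸ hpred v hv)).elim
  calc (cycLocalSources D).ncard
      ≤ (cycLocalSources D \ {r}).ncard + ({r} : Set (Fin n)).ncard :=
        Set.ncard_le_ncard_sdiff_add_ncard _ _
    _ ≤ (chordSet n G).ncard + 1 := by
      rw [Set.ncard_singleton]
      gcongr
      exact Set.ncard_le_ncard_of_injOn _
        (fun v hv => mk_mem_chordSet_of_mem_cycLocalSources hO hv.1 (hpred v hv)) hinj
        (Set.toFinite _)

end CycleOrientation

theorem stmt_12_general {n : ℕ} [NeZero n] (G : SimpleGraph (Fin n))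
    [DecidableRel G.Adj] (hG : OuterHam n G) (D : Fin n → Fin n → Prop)
    (hO : IsOrientOf G D) (r : Fin n)
    (hroot : (∀ u, ¬ D u r) ∧ ∀ v, (∀ u, ¬ D u v) → v = r) :
    {v : Fin n | (∀ u, ¬ D v u) ∧ G.degree v = 2}.ncard ≤
      (chordSet n G).ncard + 1 :=
  calc {v : Fin n | (∀ u, ¬ D v u) ∧ G.degree v = 2}.ncard
      ≤ (cycLocalSinks D).ncard :=
        Set.ncard_le_ncard (fun _ hv => mem_cycLocalSinks_of_sink hG.1 hO hv.1) (Set.toFinite _)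
    _ = (cycLocalSources D).ncard := ncard_cycLocalSinks_eq D
    _ ≤ (chordSet n G).ncard + 1 := ncard_cycLocalSources_le_ncard_chordSet_add_one hO hroot.2

/-- Let `G` be a simple 2-connected outerplanar graph with `k` chords.
For any root `r` and any `r`-acyclic orientation `D` of `G`, the number of sinks of
degree `2` is at most `k + 1`. -/
theorem stmt_12 {n : ℕ} [NeZero n] (hn : 3 ≤ n) (G : SimpleGraph (Fin n))
    [DecidableRel G.Adj] (hG : OuterHam n G) (D : Fin n → Fin n → Prop)
    (hO : IsOrientOf G D)
    (hacyc : ∀ v, ¬ Relation.TransGen D v v) (r : Fin n)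
    (hroot : (∀ u, ¬ D u r) ∧ ∀ v, (∀ u, ¬ D u v) → v = r) :
    {v : Fin n | (∀ u, ¬ D v u) ∧ G.degree v = 2}.ncard ≤
      (chordSet n G).ncard + 1 :=
  stmt_12_general G hG D hO r hroot
end

section
/- Greedy arborescence packing is optimal in acyclic digraphs: let G be an acyclic digraph rooted at r with nonnegative weights w, let e₀ be an edge of minimum positive weight, and suppose A is a spanning r-arborescence containing e₀ all of whose edges have positive weight. Then the maximum packing value for w equals w(e₀) plus the maximum packing value for w' where w'(e) = w(e) − w(e₀) for e ∈ A and w'(e) = w(e) otherwise. -/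
open scoped Classical

/-- The maximum value of a weighted packing of spanning `r`-arborescences in the
digraph `D` subject to edge capacities `w`. -/
noncomputable def packVal {V : Type*} [Fintype V] (D : V → V → Prop) (r : V)
    (w : V → V → ℝ) : ℝ :=
  sSup {x : ℝ | ∃ (t : ℕ) (lam : Fin t → ℝ) (A : Fin t → V → V → Prop),
    (∀ i, 0 ≤ lam i) ∧
    (∀ i, (∀ u v, A i u v → D u v) ∧ (∀ v, v ≠ r → ∃! u, A i u v) ∧
      (∀ u, ¬ A i u r) ∧ (∀ v, Relation.ReflTransGen (A i) r v)) ∧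
    (∀ u v, D u v → ∑ i, (if A i u v then lam i else 0) ≤ w u v) ∧
    x = ∑ i, lam i}

/-!
In an acyclic digraph the maximum packing value is the minimum in-weight of a non-root
vertex. Every arborescence enters each non-root vertex exactly once, which gives `≤`.
For `≥`, pick for every non-root vertex an entering edge of positive weight; by acyclicity
these edges form an arborescence, and packing it with the least of their weights lowers
every in-weight by that amount and kills a positive edge, so induction on the number of
positive edges applies. Subtracting `w a b` along `A` likewise lowers every in-weight by
exactly `w a b`.
-/

namespace ArborescencePacking

variable {V : Type*} {D : V → V → Prop} {r : V}

def IsArborescence (D : V → V → Prop) (r : V) (A : V → V → Prop) : Prop :=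
  (∀ u v, A u v → D u v) ∧ (∀ v, v ≠ r → ∃! u, A u v) ∧
    (∀ u, ¬ A u r) ∧ (∀ v, Relation.ReflTransGen A r v)

def packSet (D : V → V → Prop) (r : V) (w : V → V → ℝ) : Set ℝ :=
  {x : ℝ | ∃ (t : ℕ) (lam : Fin t → ℝ) (A : Fin t → V → V → Prop),
    (∀ i, 0 ≤ lam i) ∧ (∀ i, IsArborescence D r (A i)) ∧
    (∀ u v, D u v → ∑ i, (if A i u v then lam i else 0) ≤ w u v) ∧
    x = ∑ i, lam i}

theorem packVal_eq_sSup_packSet [Fintype V] (D : V → V → Prop) (r : V) (w : V → V → ℝ) :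
    packVal D r w = sSup (packSet D r w) := rfl

noncomputable def inWeight [Fintype V] (D : V → V → Prop) (w : V → V → ℝ) (v : V) : ℝ :=
  ∑ u, if D u v then w u v else 0

noncomputable def subAlong (A : V → V → Prop) (w : V → V → ℝ) (m : ℝ) : V → V → ℝ :=
  fun u v => if A u v then w u v - m else w u v

noncomputable def positiveEdges [Fintype V] (D : V → V → Prop) (w : V → V → ℝ) :
    Finset (V × V) :=
  Finset.univ.filter fun e => D e.1 e.2 ∧ 0 < w e.1 e.2

@[simp]
theorem mem_positiveEdges [Fintype V] {w : V → V → ℝ} {e : V × V} :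
    e ∈ positiveEdges D w ↔ D e.1 e.2 ∧ 0 < w e.1 e.2 := by
  simp [positiveEdges]

theorem zero_mem_packSet {w : V → V → ℝ} (hw : ∀ u v, 0 ≤ w u v) : (0 : ℝ) ∈ packSet D r w :=
  ⟨0, Fin.elim0, Fin.elim0, Fin.rec0, Fin.rec0, fun u v _ => by simpa using hw u v, by simp⟩

theorem sum_ite_of_existsUnique [Fintype V] {A : V → V → Prop} {v : V} (hA : ∃! u, A u v)
    (f : V → ℝ) :
    ∑ u, (if A u v then f u else 0) = f hA.choose := by
  rw [Finset.sum_eq_single_of_mem _ (Finset.mem_univ _) fun u _ hu => if_neg fun h =>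
    hu (hA.unique h hA.choose_spec.1), if_pos hA.choose_spec.1]

theorem le_inWeight_of_mem_packSet [Fintype V] {w : V → V → ℝ} {x : ℝ}
    (hx : x ∈ packSet D r w) {v : V} (hv : v ≠ r) : x ≤ inWeight D w v := by
  obtain ⟨t, lam, A, -, hA, hcap, rfl⟩ := hx
  calc ∑ i, lam i = ∑ i, ∑ u, (if A i u v then lam i else 0) :=
        Finset.sum_congr rfl fun i _ =>
          (sum_ite_of_existsUnique ((hA i).2.1 v hv) fun _ => lam i).symm
    _ = ∑ u, ∑ i, (if A i u v then lam i else 0) := Finset.sum_comm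
    _ ≤ inWeight D w v := Finset.sum_le_sum fun u _ => by
        split_ifs with hD
        · exact hcap u v hD
        · exact (Finset.sum_eq_zero fun i _ => if_neg fun h => hD ((hA i).1 u v h)).le

theorem bddAbove_packSet [Fintype V] (w : V → V → ℝ) {v₀ : V} (hv₀ : v₀ ≠ r) :
    BddAbove (packSet D r w) :=
  ⟨inWeight D w v₀, fun _ hx => le_inWeight_of_mem_packSet hx hv₀⟩

theorem add_mem_packSet {A : V → V → Prop} (hA : IsArborescence D r A) {w : V → V → ℝ}
    {m x : ℝ} (hm : 0 ≤ m) (hx : x ∈ packSet D r (subAlong A w m)) : m + x ∈ packSet D r w := by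
  obtain ⟨t, lam, B, hlam, hB, hcap, rfl⟩ := hx
  refine ⟨t + 1, Fin.cons m lam, Fin.cons A B, Fin.cases hm hlam, Fin.cases hA hB,
    fun u v huv => ?_, by simp [Fin.sum_univ_succ]⟩
  have := hcap u v huv
  simp only [subAlong] at this
  simp only [Fin.sum_univ_succ, Fin.cons_zero, Fin.cons_succ]
  split_ifs at this ⊢ <;> linarith

theorem inWeight_subAlong [Fintype V] {A : V → V → Prop} (hAD : ∀ u v, A u v → D u v)
    (w : V → V → ℝ) (m : ℝ) {v : V} (hv : ∃! u, A u v) :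
    inWeight D (subAlong A w m) v = inWeight D w v - m := by
  have hsplit : ∀ u, (if D u v then subAlong A w m u v else 0) =
      (if D u v then w u v else 0) - if A u v then m else 0 := by
    intro u
    by_cases hA : A u v
    · simp [subAlong, hA, hAD u v hA]
    · simp [subAlong, hA]
  simp only [inWeight, hsplit, Finset.sum_sub_distrib, sum_ite_of_existsUnique hv]

theorem subAlong_nonneg {A : V → V → Prop} {w : V → V → ℝ} {m : ℝ} (hw : ∀ u v, 0 ≤ w u v)
    (hm : ∀ u v, A u v → m ≤ w u v) (u v : V) : 0 ≤ subAlong A w m u v := by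
  unfold subAlong
  split_ifs with h
  · linarith [hm u v h]
  · exact hw u v

theorem positiveEdges_subAlong_ssubset [Fintype V] {A : V → V → Prop} {w : V → V → ℝ} {m : ℝ}
    (hm : 0 < m) {u v : V} (hDuv : D u v) (hAuv : A u v) (huv : w u v = m) :
    positiveEdges D (subAlong A w m) ⊂ positiveEdges D w := by
  refine Finset.ssubset_iff_of_subset (fun e he => ?_) |>.2 ⟨(u, v), ?_, ?_⟩
  · simp only [mem_positiveEdges, subAlong] at he ⊢
    refine ⟨he.1, ?_⟩
    split_ifs at he <;> linarith [he.2]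
  · simp [hDuv, huv, hm]
  · simp [subAlong, hAuv, huv]

def parentRel (r : V) (p : V → V) (u v : V) : Prop :=
  v ≠ r ∧ u = p v

theorem isArborescence_parentRel [Finite V] (hD : ∀ v, ¬ Relation.TransGen D v v) (p : V → V)
    (hp : ∀ v, v ≠ r → D (p v) v) : IsArborescence D r (parentRel r p) := by
  refine ⟨fun u v ⟨hv, hu⟩ => hu ▸ hp v hv, fun v hv => ⟨p v, ⟨hv, rfl⟩, fun _ h => h.2⟩,
    fun _ h => h.1 rfl, fun v => ?_⟩
  have : Std.Irrefl (Relation.TransGen D) := ⟨hD⟩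
  induction v using (Finite.wellFounded_of_trans_of_irrefl (Relation.TransGen D)).induction with
  | _ v ih =>
    by_cases hv : v = r
    · exact hv ▸ Relation.ReflTransGen.refl
    · exact (ih (p v) (.single (hp v hv))).tail ⟨hv, rfl⟩

theorem exists_mem_packSet_ge [Fintype V] (hD : ∀ v, ¬ Relation.TransGen D v v) {v₀ : V}
    (hv₀ : v₀ ≠ r) {w : V → V → ℝ} (hw : ∀ u v, 0 ≤ w u v) {x : ℝ}
    (hx : ∀ v, v ≠ r → x ≤ inWeight D w v) : ∃ y ∈ packSet D r w, x ≤ y := by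
  by_cases hpar : ∀ v, v ≠ r → ∃ u, D u v ∧ 0 < w u v
  case neg =>
    push Not at hpar
    obtain ⟨v, hv, hnone⟩ := hpar
    have hzero : inWeight D w v = 0 := Finset.sum_eq_zero fun u _ => by
      split_ifs with h
      · exact le_antisymm (hnone u h) (hw u v)
      · rfl
    exact ⟨0, zero_mem_packSet hw, hzero ▸ hx v hv⟩
  choose! p hpD hppos using hpar
  have hA := isArborescence_parentRel hD p hpD
  have : Nonempty {v // v ≠ r} := ⟨⟨v₀, hv₀⟩⟩
  obtain ⟨vmin, hvmin⟩ := exists_eq_ciInf_of_finite (f := fun v : {v // v ≠ r} => w (p v) v)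
  set m := ⨅ v : {v // v ≠ r}, w (p v) v
  have hm_pos : 0 < m := hvmin ▸ hppos vmin vmin.2
  have hm_le : ∀ u v, parentRel r p u v → m ≤ w u v := by
    rintro u v ⟨hv, rfl⟩
    exact ciInf_le (Set.finite_range _).bddBelow (⟨v, hv⟩ : {v // v ≠ r})
  have hfewer : (positiveEdges D (subAlong (parentRel r p) w m)).card <
      (positiveEdges D w).card := Finset.card_lt_card
    (positiveEdges_subAlong_ssubset hm_pos (hpD vmin vmin.2) ⟨vmin.2, rfl⟩ hvmin)
  obtain ⟨y, hy, hxy⟩ := exists_mem_packSet_ge hD hv₀ (subAlong_nonneg hw hm_le) (x := x - m)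
    fun v hv => by
      rw [inWeight_subAlong hA.1 w m (hA.2.1 v hv)]
      linarith [hx v hv]
  exact ⟨m + y, add_mem_packSet hA hm_pos.le hy, by linarith⟩
termination_by (positiveEdges D w).card

theorem packVal_eq_iInf_inWeight [Fintype V] (hD : ∀ v, ¬ Relation.TransGen D v v) {v₀ : V}
    (hv₀ : v₀ ≠ r) {w : V → V → ℝ} (hw : ∀ u v, 0 ≤ w u v) :
    packVal D r w = ⨅ v : {v // v ≠ r}, inWeight D w v := by
  have : Nonempty {v // v ≠ r} := ⟨⟨v₀, hv₀⟩⟩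
  rw [packVal_eq_sSup_packSet]
  refine le_antisymm (csSup_le ⟨0, zero_mem_packSet hw⟩ fun x hx =>
    le_ciInf fun v => le_inWeight_of_mem_packSet hx v.2) ?_
  obtain ⟨y, hy, hle⟩ := exists_mem_packSet_ge hD hv₀ hw fun v hv =>
    ciInf_le (f := fun v : {v // v ≠ r} => inWeight D w v) (Set.finite_range _).bddBelow ⟨v, hv⟩
  exact hle.trans (le_csSup (bddAbove_packSet w hv₀) hy)

theorem iInf_inWeight_subAlong [Fintype V] [Nonempty {v // v ≠ r}] {A : V → V → Prop}
    (hAD : ∀ u v, A u v → D u v) (hA : ∀ v, v ≠ r → ∃! u, A u v) (w : V → V → ℝ) (m : ℝ) :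
    ⨅ v : {v // v ≠ r}, inWeight D (subAlong A w m) v =
      (⨅ v : {v // v ≠ r}, inWeight D w v) - m := by
  rw [← OrderIso.subRight_apply, (OrderIso.subRight m).map_ciInf (Set.finite_range _).bddBelow]
  exact iInf_congr fun v => inWeight_subAlong hAD w m (hA v v.2)

end ArborescencePacking

open ArborescencePacking in
theorem stmt_16_general {V : Type*} [Fintype V] (D : V → V → Prop) (r : V) (w : V → V → ℝ)
    (hD : ∀ v, ¬ Relation.TransGen D v v)
    (hw : ∀ u v, 0 ≤ w u v)
    (a b : V)
    (hmin : ∀ u v, D u v → 0 < w u v → w a b ≤ w u v)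
    (A : V → V → Prop)
    (hA : (∀ u v, A u v → D u v) ∧ (∀ v, v ≠ r → ∃! u, A u v) ∧
      (∀ u, ¬ A u r) ∧ (∀ v, Relation.ReflTransGen A r v))
    (hAab : A a b) (hApos : ∀ u v, A u v → 0 < w u v) :
    packVal D r w =
      w a b + packVal D r (fun u v => if A u v then w u v - w a b else w u v) := by
  have hbr : b ≠ r := fun h => hA.2.2.1 a (h ▸ hAab)
  have hw' : ∀ u v, 0 ≤ subAlong A w (w a b) u v :=
    subAlong_nonneg hw fun u v huv => hmin u v (hA.1 u v huv) (hApos u v huv)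
  have : Nonempty {v // v ≠ r} := ⟨⟨b, hbr⟩⟩
  change _ = _ + packVal D r (subAlong A w (w a b))
  rw [packVal_eq_iInf_inWeight hD hbr hw, packVal_eq_iInf_inWeight hD hbr hw',
    iInf_inWeight_subAlong hA.1 hA.2.1]
  ring

/-- Greedy arborescence packing is optimal in acyclic digraphs: subtracting
the minimum positive weight `w (a, b)` along a spanning `r`-arborescence `A` containing
the edge `(a, b)` (all of whose edges have positive weight) decreases the maximum packing
value by exactly `w (a, b)`. -/
theorem stmt_16 {V : Type*} [Fintype V] (D : V → V → Prop) (r : V) (w : V → V → ℝ)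
    (hD : ∀ v, ¬ Relation.TransGen D v v)
    (hroot : (∀ u, ¬ D u r) ∧ ∀ v, (∀ u, ¬ D u v) → v = r)
    (hw : ∀ u v, 0 ≤ w u v)
    (a b : V) (hab : D a b) (hpos : 0 < w a b)
    (hmin : ∀ u v, D u v → 0 < w u v → w a b ≤ w u v)
    (A : V → V → Prop)
    (hA : (∀ u v, A u v → D u v) ∧ (∀ v, v ≠ r → ∃! u, A u v) ∧
      (∀ u, ¬ A u r) ∧ (∀ v, Relation.ReflTransGen A r v))
    (hAab : A a b) (hApos : ∀ u v, A u v → 0 < w u v) :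
    packVal D r w =
      w a b + packVal D r (fun u v => if A u v then w u v - w a b else w u v) :=
  stmt_16_general D r w hD hw a b hmin A hA hAab hApos
end
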